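/- arXiv:2511.07125 — 2 statements merged into one kernel-verified Lean document; each statement's English description precedes it below -/
import Mathlib

section
/- Let n, k be positive integers with k ≤ n and let Y ≥ 0 be an integer. If k + i ≤ 2n for all i in {0, ..., Y}, then Σ_{i=0}^{Y} binom(k + i, i + 8) · (1/n)^{i+8} ≤ (k/n)^8 · Σ_{i=0}^{Y} 2^i/(i+8)! ≤ (k/n)^8. -/
theorem stmt_8 (n k : ℕ) (hn : 0 < n) (hk : 0 < k) (hkn : k ≤ n) (Y : ℕ)
    (h : ∀ i ≤ Y, k + i ≤ 2 * n) :
    ∑ i ∈ Finset.range (Y + 1), ((k + i).choose (i + 8) : ℝ) * (1 / n) ^ (i + 8)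
      ≤ ((k : ℝ) / n) ^ 8 * ∑ i ∈ Finset.range (Y + 1), (2 : ℝ) ^ i / (Nat.factorial (i + 8)) ∧
    ((k : ℝ) / n) ^ 8 * ∑ i ∈ Finset.range (Y + 1), (2 : ℝ) ^ i / (Nat.factorial (i + 8))
      ≤ ((k : ℝ) / n) ^ 8 := by
  have hn' : (0 : ℝ) < n := by exact_mod_cast hn
  constructor
  · rw [Finset.mul_sum]
    apply Finset.sum_le_sum
    intro i hi
    simp only [Finset.mem_range, Nat.lt_succ_iff] at hi
    -- key nat inequality
    have key : (k + i).choose (i + 8) * Nat.factorial (i + 8) ≤ k ^ 8 * (2 * n) ^ i := by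
      have h1 : k.descFactorial 8 * (k + i).descFactorial i = (k + i).descFactorial (i + 8) := by
        have := Nat.descFactorial_mul_descFactorial (k := i) (m := i + 8) (n := k + i)
          (by omega)
        simpa using this
      have h2 : (k + i).choose (i + 8) * Nat.factorial (i + 8) = (k + i).descFactorial (i + 8) := by
        rw [Nat.descFactorial_eq_factorial_mul_choose, Nat.mul_comm]
      rw [h2, ← h1]
      exact Nat.mul_le_mul (Nat.descFactorial_le_pow _ _)
        (le_trans (Nat.descFactorial_le_pow _ _) (Nat.pow_le_pow_left (h i hi) i))
    have keyR : ((k + i).choose (i + 8) : ℝ) * Nat.factorial (i + 8) ≤ k ^ 8 * (2 * n) ^ i := by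
      exact_mod_cast key
    have hfac : (0 : ℝ) < (Nat.factorial (i + 8) : ℝ) := by exact_mod_cast Nat.factorial_pos _
    have lhs_eq : ((k + i).choose (i + 8) : ℝ) * (1 / n) ^ (i + 8)
        = ((k + i).choose (i + 8) : ℝ) / (n : ℝ) ^ (i + 8) := by
      rw [div_pow, one_pow, mul_one_div]
    have rhs_eq : ((k : ℝ) / n) ^ 8 * ((2 : ℝ) ^ i / (Nat.factorial (i + 8)))
        = ((k : ℝ) ^ 8 * 2 ^ i) / ((n : ℝ) ^ 8 * (Nat.factorial (i + 8))) := by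
      rw [div_pow, div_mul_div_comm]
    rw [lhs_eq, rhs_eq, div_le_div_iff₀ (by positivity) (by positivity)]
    calc ((k + i).choose (i + 8) : ℝ) * ((n : ℝ) ^ 8 * (Nat.factorial (i + 8)))
        = (((k + i).choose (i + 8) : ℝ) * (Nat.factorial (i + 8))) * (n : ℝ) ^ 8 := by ring
      _ ≤ ((k : ℝ) ^ 8 * (2 * n) ^ i) * (n : ℝ) ^ 8 := by gcongr
      _ = (k : ℝ) ^ 8 * 2 ^ i * (n : ℝ) ^ (i + 8) := by rw [mul_pow, pow_add]; ring
  · have h8 : (0 : ℝ) ≤ ((k : ℝ) / n) ^ 8 := by positivity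
    have hsum : ∑ i ∈ Finset.range (Y + 1), (2 : ℝ) ^ i / (Nat.factorial (i + 8)) ≤ 1 := by
      calc ∑ i ∈ Finset.range (Y + 1), (2 : ℝ) ^ i / (Nat.factorial (i + 8))
          ≤ ∑ i ∈ Finset.range (Y + 1), (2 / 9 : ℝ) ^ i / 40320 := by
            apply Finset.sum_le_sum
            intro i _
            have hf : (40320 : ℝ) * 9 ^ i ≤ (Nat.factorial (i + 8) : ℝ) := by
              have h0 : Nat.factorial 8 * 9 ^ i ≤ Nat.factorial (8 + i) :=
                Nat.factorial_mul_pow_le_factorial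
              have h' : Nat.factorial 8 * 9 ^ i ≤ Nat.factorial (i + 8) := by
                rwa [Nat.add_comm 8 i] at h0
              have h8 : Nat.factorial 8 = 40320 := by decide
              rw [h8] at h'
              exact_mod_cast h'
            rw [div_pow, div_div]
            apply div_le_div_of_nonneg_left (by positivity) (by positivity)
            calc (9 : ℝ) ^ i * 40320 = 40320 * 9 ^ i := by ring
              _ ≤ (Nat.factorial (i + 8) : ℝ) := hf
        _ = (∑ i ∈ Finset.range (Y + 1), (2 / 9 : ℝ) ^ i) / 40320 := by
            rw [Finset.sum_div]
        _ ≤ (9 / 7 : ℝ) / 40320 := by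
            apply div_le_div_of_nonneg_right _ (by norm_num)
            rw [geom_sum_eq (by norm_num : (2/9 : ℝ) ≠ 1),
              div_le_iff_of_neg (by norm_num : (2/9 : ℝ) - 1 < 0)]
            nlinarith [pow_nonneg (by norm_num : (0:ℝ) ≤ 2/9) (Y + 1)]
        _ ≤ 1 := by norm_num
    calc ((k : ℝ) / n) ^ 8 * ∑ i ∈ Finset.range (Y + 1), (2 : ℝ) ^ i / (Nat.factorial (i + 8))
        ≤ ((k : ℝ) / n) ^ 8 * 1 := by gcongr
      _ = ((k : ℝ) / n) ^ 8 := mul_one _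
end

section
/- Let X_1, ..., X_k be independent geometric random variables on {1, 2, 3, ...} where X_i has success probability p_i ∈ (0,1], let X = Σ X_i, s = Σ 1/p_i², and p* = min_i p_i. Then for every λ ≥ 0, P(X ≥ E[X] + λ) ≤ exp(−(1/4)·min{λ²/s, λ·p*}). -/
/-!
Chernoff bound. For `0 ≤ t`, independence gives
`P(X ≥ c) ≤ e^{-tc} ∏ᵢ E[e^{t Xᵢ}]`, and for `t ≤ pᵢ / 2` the moment generating function of a
geometric variable satisfies `pᵢ eᵗ / (1 - (1 - pᵢ) eᵗ) ≤ exp (t / pᵢ + t² / pᵢ²)`, so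
`P(X ≥ E[X] + λ) ≤ exp (t² s - t λ)`. The choice `t = min (λ / (2 s)) (p* / 2)` makes this exponent
at most `-(1/4) min (λ² / s, λ p*)`.
-/

open MeasureTheory ProbabilityTheory Real
open scoped ENNReal

theorem tsum_pi_prod_le_prod_tsum {ι : Type*} [Fintype ι] {β : ι → Type*}
    (F : ∀ i, β i → ℝ≥0∞) : ∑' n : (∀ i, β i), ∏ i, F i (n i) ≤ ∏ i, ∑' j, F i j := by
  classical
  rw [ENNReal.tsum_eq_iSup_sum]
  refine iSup_le fun T => ?_
  calc ∑ n ∈ T, ∏ i, F i (n i)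
      ≤ ∑ n ∈ Fintype.piFinset fun i => T.image (· i), ∏ i, F i (n i) :=
        Finset.sum_le_sum_of_subset fun n hn =>
          Fintype.mem_piFinset.2 fun i => Finset.mem_image_of_mem _ hn
    _ = ∏ i, ∑ j ∈ T.image (· i), F i j := (Finset.prod_univ_sum _ _).symm
    _ ≤ ∏ i, ∑' j, F i j := Finset.prod_le_prod' fun i _ => ENNReal.sum_le_tsum _

/-- The `Xᵢ` are not assumed measurable, so instead of Markov's inequality for `e^{t X}` the event
is covered by the countably many atoms `⋂ i, {Xᵢ = nᵢ}`. -/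
theorem measure_le_sum_le_exp_mul_prod_tsum {Ω ι : Type*} [MeasurableSpace Ω] {μ : Measure Ω}
    [Fintype ι] {X : ι → Ω → ℕ} (hind : iIndepFun X μ) {t : ℝ} (ht : 0 ≤ t) (c : ℝ) :
    μ {ω | c ≤ ∑ i, (X i ω : ℝ)} ≤ ENNReal.ofReal (exp (-(t * c))) *
      ∏ i, ∑' j : ℕ, μ {ω | X i ω = j} * ENNReal.ofReal (exp (t * j)) := by
  set T := {n : ι → ℕ | c ≤ ∑ i, (n i : ℝ)}
  have hcover : {ω | c ≤ ∑ i, (X i ω : ℝ)} ⊆ ⋃ n : T, ⋂ i, {ω | X i ω = n.1 i} := fun ω hω =>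
    Set.mem_iUnion.2 ⟨⟨fun i => X i ω, hω⟩, Set.mem_iInter.2 fun _ => rfl⟩
  have hpoint : ∀ n ∈ T, μ (⋂ i, {ω | X i ω = n i}) ≤ ENNReal.ofReal (exp (-(t * c))) *
      ∏ i, μ {ω | X i ω = n i} * ENNReal.ofReal (exp (t * n i)) := by
    intro n hn
    have hprod : μ (⋂ i, {ω | X i ω = n i}) = ∏ i, μ {ω | X i ω = n i} := by
      have h := hind.measure_inter_preimage_eq_mul Finset.univ (sets := fun i => {n i})
        fun _ _ => trivial
      simp only [Finset.mem_univ, Set.iInter_true] at h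
      exact h
    have htilt : 1 ≤ ENNReal.ofReal (exp (-(t * c))) * ∏ i, ENNReal.ofReal (exp (t * n i)) := by
      rw [← ENNReal.ofReal_prod_of_nonneg fun _ _ => (exp_pos _).le,
        ← ENNReal.ofReal_mul (exp_pos _).le, ← exp_sum, ← exp_add, ← Finset.mul_sum]
      exact ENNReal.one_le_ofReal.2 (one_le_exp (by nlinarith [show c ≤ _ from hn]))
    calc μ (⋂ i, {ω | X i ω = n i}) = (∏ i, μ {ω | X i ω = n i}) * 1 := by rw [hprod, mul_one]
      _ ≤ (∏ i, μ {ω | X i ω = n i}) *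
          (ENNReal.ofReal (exp (-(t * c))) * ∏ i, ENNReal.ofReal (exp (t * n i))) := by gcongr
      _ = _ := by rw [Finset.prod_mul_distrib]; ring
  calc μ {ω | c ≤ ∑ i, (X i ω : ℝ)} ≤ ∑' n : T, μ (⋂ i, {ω | X i ω = n.1 i}) :=
        (measure_mono hcover).trans (measure_iUnion_le _)
    _ ≤ ∑' n : T, ENNReal.ofReal (exp (-(t * c))) *
          ∏ i, μ {ω | X i ω = n.1 i} * ENNReal.ofReal (exp (t * n.1 i)) :=
        ENNReal.tsum_le_tsum fun n => hpoint n n.2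
    _ ≤ ∑' n : ι → ℕ, ENNReal.ofReal (exp (-(t * c))) *
          ∏ i, μ {ω | X i ω = n i} * ENNReal.ofReal (exp (t * n i)) :=
        ENNReal.tsum_comp_le_tsum_of_injective Subtype.val_injective _
    _ ≤ _ := by
      rw [ENNReal.tsum_mul_left]
      gcongr
      exact tsum_pi_prod_le_prod_tsum fun i (j : ℕ) =>
        μ {ω | X i ω = j} * ENNReal.ofReal (exp (t * j))

theorem inv_one_sub_le_exp_add_sq {a : ℝ} (ha0 : 0 ≤ a) (ha : a ≤ 1 / 2) :
    (1 - a)⁻¹ ≤ exp (a + a ^ 2) := by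
  rw [inv_le_iff_one_le_mul₀ (by linarith)]
  have := quadratic_le_exp_of_nonneg (x := a + a ^ 2) (by positivity)
  nlinarith [mul_nonneg ha0 (mul_nonneg ha0 ha0)]

theorem mul_exp_div_one_sub_le {p t : ℝ} (hp : 0 < p) (ht0 : 0 ≤ t) (htp : t ≤ p / 2) :
    0 < 1 - (1 - p) * exp t ∧
      p * exp t / (1 - (1 - p) * exp t) ≤ exp (t / p + t ^ 2 / p ^ 2) := by
  have hden : exp t * (p - t) ≤ 1 - (1 - p) * exp t := by
    have h := mul_le_mul_of_nonneg_left (one_sub_le_exp_neg t) (exp_pos t).le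
    rw [← exp_add, add_neg_cancel, exp_zero] at h
    linarith
  have hpos : 0 < exp t * (p - t) := mul_pos (exp_pos t) (by linarith)
  refine ⟨hpos.trans_le hden, ?_⟩
  calc p * exp t / (1 - (1 - p) * exp t) ≤ p * exp t / (exp t * (p - t)) :=
        div_le_div_of_nonneg_left (by positivity) hpos hden
    _ = (1 - t / p)⁻¹ := by field_simp
    _ ≤ exp (t / p + (t / p) ^ 2) :=
        inv_one_sub_le_exp_add_sq (by positivity) (by rw [div_le_iff₀ hp]; linarith)
    _ = exp (t / p + t ^ 2 / p ^ 2) := by rw [div_pow]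

theorem tsum_measure_mul_exp_le_of_geometric {Ω : Type*} [MeasurableSpace Ω] {μ : Measure Ω}
    {Y : Ω → ℕ} {p t : ℝ} (hp : p ∈ Set.Ioc 0 1)
    (hgeom : ∀ j : ℕ, 1 ≤ j → μ {ω | Y ω = j} = ENNReal.ofReal ((1 - p) ^ (j - 1) * p))
    (hzero : μ {ω | Y ω = 0} = 0) (ht0 : 0 ≤ t) (htp : t ≤ p / 2) :
    ∑' j : ℕ, μ {ω | Y ω = j} * ENNReal.ofReal (exp (t * j)) ≤
      ENNReal.ofReal (exp (t / p + t ^ 2 / p ^ 2)) := by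
  obtain ⟨hp0, hp1⟩ := hp
  obtain ⟨hr, hbound⟩ := mul_exp_div_one_sub_le hp0 ht0 htp
  set r := (1 - p) * exp t
  have hr0 : 0 ≤ r := mul_nonneg (by linarith) (exp_pos t).le
  have hterm : ∀ m : ℕ, μ {ω | Y ω = m + 1} * ENNReal.ofReal (exp (t * (m + 1 : ℕ))) =
      ENNReal.ofReal (p * exp t) * ENNReal.ofReal r ^ m := by
    intro m
    have hexp : exp (t * (m + 1 : ℕ)) = exp t * exp t ^ m := by
      rw [← exp_nat_mul, ← exp_add]; push_cast; ring_nf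
    rw [hgeom (m + 1) le_add_self, Nat.add_sub_cancel, ← ENNReal.ofReal_pow hr0,
      ← ENNReal.ofReal_mul (mul_nonneg (pow_nonneg (by linarith) _) hp0.le),
      ← ENNReal.ofReal_mul (by positivity), hexp, mul_pow]
    ring_nf
  calc ∑' j : ℕ, μ {ω | Y ω = j} * ENNReal.ofReal (exp (t * j))
      = ∑' m : ℕ, ENNReal.ofReal (p * exp t) * ENNReal.ofReal r ^ m := by
        rw [tsum_eq_zero_add' ENNReal.summable, hzero, zero_mul, zero_add]
        exact tsum_congr hterm
    _ = ENNReal.ofReal (p * exp t / (1 - r)) := by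
        rw [ENNReal.tsum_mul_left, ENNReal.tsum_geometric, ← ENNReal.ofReal_one,
          ← ENNReal.ofReal_sub _ hr0, ← ENNReal.ofReal_inv_of_pos hr,
          ← ENNReal.ofReal_mul (by positivity), div_eq_mul_inv]
    _ ≤ ENNReal.ofReal (exp (t / p + t ^ 2 / p ^ 2)) := ENNReal.ofReal_le_ofReal hbound

theorem sq_mul_sub_mul_le_neg_quarter_min {s q lam : ℝ} (hs : 0 < s) (hq : 0 ≤ q) :
    min (lam / (2 * s)) (q / 2) ^ 2 * s - min (lam / (2 * s)) (q / 2) * lam ≤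
      -(1 / 4) * min (lam ^ 2 / s) (lam * q) := by
  rcases le_total (lam / (2 * s)) (q / 2) with h | h
  · rw [min_eq_left h]
    have hval : (lam / (2 * s)) ^ 2 * s - lam / (2 * s) * lam = -(1 / 4) * (lam ^ 2 / s) := by
      field_simp; ring
    rw [hval]
    nlinarith [min_le_left (lam ^ 2 / s) (lam * q)]
  · rw [min_eq_right h]
    have hqs : q * s ≤ lam := by
      rw [div_le_div_iff₀ (by norm_num) (by linarith)] at h; linarith
    nlinarith [min_le_right (lam ^ 2 / s) (lam * q)]

theorem stmt_15_general {Ω : Type*} [MeasurableSpace Ω] (μ : Measure Ω)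
    (k : ℕ) (X : Fin k → Ω → ℕ) (p : Fin k → ℝ)
    (hp : ∀ i, p i ∈ Set.Ioc (0 : ℝ) 1)
    (hind : ProbabilityTheory.iIndepFun X μ)
    (hgeom : ∀ i, ∀ j : ℕ, 1 ≤ j →
      μ {ω | X i ω = j} = ENNReal.ofReal ((1 - p i) ^ (j - 1) * p i))
    (hzero : ∀ i, μ {ω | X i ω = 0} = 0)
    (pstar : ℝ) (hpstar : IsLeast (Set.range p) pstar)
    (s : ℝ) (hs : s = ∑ i, 1 / (p i) ^ 2)
    (lam : ℝ) (hlam : 0 ≤ lam) :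
    μ {ω | (∑ i, (X i ω : ℝ)) ≥ (∑ i, 1 / p i) + lam}
      ≤ ENNReal.ofReal (Real.exp (-(1 / 4) * min (lam ^ 2 / s) (lam * pstar))) := by
  obtain ⟨⟨i₀, rfl⟩, hmin⟩ := hpstar
  have hpstar : ∀ i, p i₀ ≤ p i := fun i => hmin ⟨i, rfl⟩
  have hs0 : 0 < s := hs ▸ Finset.sum_pos (fun i _ => by have := (hp i).1; positivity)
    ⟨i₀, Finset.mem_univ _⟩
  set t := min (lam / (2 * s)) (p i₀ / 2)
  have ht0 : 0 ≤ t := le_min (by positivity) (by linarith [(hp i₀).1])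
  have htp : ∀ i, t ≤ p i / 2 := fun i => (min_le_right _ _).trans (by linarith [hpstar i])
  calc μ {ω | (∑ i, 1 / p i) + lam ≤ ∑ i, (X i ω : ℝ)}
      ≤ ENNReal.ofReal (exp (-(t * ((∑ i, 1 / p i) + lam)))) *
          ∏ i, ∑' j : ℕ, μ {ω | X i ω = j} * ENNReal.ofReal (exp (t * j)) :=
        measure_le_sum_le_exp_mul_prod_tsum hind ht0 _
    _ ≤ ENNReal.ofReal (exp (-(t * ((∑ i, 1 / p i) + lam)))) *
          ∏ i, ENNReal.ofReal (exp (t / p i + t ^ 2 / p i ^ 2)) := by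
        gcongr with i
        exact tsum_measure_mul_exp_le_of_geometric (hp i) (hgeom i) (hzero i) ht0 (htp i)
    _ = ENNReal.ofReal (exp (t ^ 2 * s - t * lam)) := by
        rw [← ENNReal.ofReal_prod_of_nonneg fun _ _ => (exp_pos _).le,
          ← ENNReal.ofReal_mul (exp_pos _).le, ← exp_sum, ← exp_add, Finset.sum_add_distrib, hs,
          mul_add, Finset.mul_sum, Finset.mul_sum]
        simp only [mul_one_div]
        ring_nf
    _ ≤ _ := ENNReal.ofReal_le_ofReal <| exp_le_exp.2 <|
        sq_mul_sub_mul_le_neg_quarter_min hs0 (hp i₀).1.le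

/-- Theorem 1 of Witt (2014): concentration of sums of independent geometric random variables. -/
theorem stmt_15 {Ω : Type*} [MeasurableSpace Ω] (μ : Measure Ω) [IsProbabilityMeasure μ]
    (k : ℕ) (hk : 0 < k) (X : Fin k → Ω → ℕ) (p : Fin k → ℝ)
    (hp : ∀ i, p i ∈ Set.Ioc (0 : ℝ) 1)
    (hind : ProbabilityTheory.iIndepFun X μ)
    (hgeom : ∀ i, ∀ j : ℕ, 1 ≤ j →
      μ {ω | X i ω = j} = ENNReal.ofReal ((1 - p i) ^ (j - 1) * p i))
    (hzero : ∀ i, μ {ω | X i ω = 0} = 0)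
    (pstar : ℝ) (hpstar : IsLeast (Set.range p) pstar)
    (s : ℝ) (hs : s = ∑ i, 1 / (p i) ^ 2)
    (lam : ℝ) (hlam : 0 ≤ lam) :
    μ {ω | (∑ i, (X i ω : ℝ)) ≥ (∑ i, 1 / p i) + lam}
      ≤ ENNReal.ofReal (Real.exp (-(1 / 4) * min (lam ^ 2 / s) (lam * pstar))) :=
  stmt_15_general μ k X p hp hind hgeom hzero pstar hpstar s hs lam hlam
end
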